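/- Let a(z) = Σ_{n≥0} a_n z^{n-1} and define φ⁺ on plane trees recursively by φ⁺(•-rooted tree B₊(F)) = P₊(φ⁺(F)·a(z)) with φ⁺ multiplicative on forests and P₊ the polar-part projection. Then for any plane tree T, φ⁺(Y_T) = Σ_{F ≥ T} a_F z^{-r(F)}, where the sum is over all plane forests F above T in the Tamari order, r(F) is the number of roots of F, and a_F = a_{c₁}⋯a_{c_n} for the reverse Polish code c₁⋯c_n of F. -/

import Mathlib

/-- Plane trees: a node with an ordered (possibly empty) list of subtrees. -/
inductive PlaneTree : Type
  | node : List PlaneTree → PlaneTree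

namespace PlaneTree

mutual
  /-- Number of nodes of a plane tree. -/
  def sizeT : PlaneTree → ℕ
    | .node ts => 1 + sizeF ts
  /-- Number of nodes of a plane forest. -/
  def sizeF : List PlaneTree → ℕ
    | [] => 0
    | t :: ts => sizeT t + sizeF ts
end

/-- Cover relation of the Tamari order on plane forests (`covF F G` means `G` covers `F`):
the leftmost subtree of a non-leaf vertex `x` is cut off and grafted back as the left
sibling of `x` (for `x` a root of the forest, it becomes a new component on the left;
this corresponds to a cut at a non-root vertex of `B₊(F)`). -/
inductive covF : List PlaneTree → List PlaneTree → Prop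
  | top (pre post us : List PlaneTree) (u : PlaneTree) :
      covF (pre ++ PlaneTree.node (u :: us) :: post) (pre ++ u :: PlaneTree.node us :: post)
  | deep (pre post : List PlaneTree) (ts ts' : List PlaneTree) :
      covF ts ts' → covF (pre ++ PlaneTree.node ts :: post) (pre ++ PlaneTree.node ts' :: post)

/-- The Tamari order on plane forests: `tamari F G` means `F ≤ G`.
For trees, `tamari [T] [T']` is the Tamari order on plane trees. -/
def tamari (F G : List PlaneTree) : Prop := Relation.ReflTransGen covF F G

mutual
  /-- Reverse Polish code of a tree: each node is labelled by its number of children,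
  read in postorder. -/
  def codeRT : PlaneTree → List ℕ
    | .node ts => codeRF ts ++ [ts.length]
  /-- Reverse Polish code of a forest. -/
  def codeRF : List PlaneTree → List ℕ
    | [] => []
    | t :: ts => codeRT t ++ codeRF ts
end

/-- The monomial `a_F = a_{c₁}⋯a_{c_n}` where `c₁⋯c_n` is the reverse Polish code of
the forest `F`; the `aᵢ` are independent commuting indeterminates. -/
noncomputable def aMonomial (F : List PlaneTree) : MvPolynomial ℕ ℚ :=
  ((codeRF F).map (fun c => MvPolynomial.X c)).prod

/-- Laurent series over `MvPolynomial ℕ ℚ`, as coefficient functions `ℤ → MvPolynomial ℕ ℚ`,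
multiplied by the Cauchy product. -/
noncomputable def lmul (f g : ℤ → MvPolynomial ℕ ℚ) : ℤ → MvPolynomial ℕ ℚ :=
  fun n => ∑ᶠ i : ℤ, f i * g (n - i)

/-- The projection `P₊` onto the polar part (negative powers of `z`). -/
noncomputable def pplus (f : ℤ → MvPolynomial ℕ ℚ) : ℤ → MvPolynomial ℕ ℚ :=
  fun n => if n < 0 then f n else 0

open Classical in
/-- The series `a(z) = Σ_{n≥0} aₙ z^{n-1}`: its coefficient of `z^m` is `a_{m+1}`
for `m ≥ -1`, and `0` otherwise. -/
noncomputable def aSeries : ℤ → MvPolynomial ℕ ℚ :=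
  fun m => if -1 ≤ m then MvPolynomial.X (m + 1).toNat else 0

mutual
  /-- `φ⁺` on trees: `φ⁺(B₊(F)) = P₊(φ⁺(F)·a(z))`. -/
  noncomputable def phiT : PlaneTree → ℤ → MvPolynomial ℕ ℚ
    | .node ts => pplus (lmul (phiF ts) aSeries)
  /-- `φ⁺` on forests: multiplicative, with `φ⁺(∅) = 1`. -/
  noncomputable def phiF : List PlaneTree → ℤ → MvPolynomial ℕ ℚ
    | [] => fun n => if n = 0 then 1 else 0
    | t :: ts => lmul (phiT t) (phiF ts)
end


section Lemmas
open MvPolynomial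

lemma sizeF_nil : sizeF ([] : List PlaneTree) = 0 := rfl
lemma sizeF_cons (t : PlaneTree) (ts : List PlaneTree) :
    sizeF (t :: ts) = sizeT t + sizeF ts := rfl
lemma sizeT_node (ts : List PlaneTree) : sizeT (node ts) = 1 + sizeF ts := rfl

lemma sizeF_append (A B : List PlaneTree) : sizeF (A ++ B) = sizeF A + sizeF B := by
  induction A with
  | nil => simp [sizeF_nil]
  | cons t ts ih => simp [sizeF_cons, ih]; ring

lemma one_le_sizeT (t : PlaneTree) : 1 ≤ sizeT t := by
  cases t with | node ts => rw [sizeT_node]; omega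

lemma length_le_sizeF (F : List PlaneTree) : F.length ≤ sizeF F := by
  induction F with
  | nil => simp [sizeF_nil]
  | cons t ts ih => have := one_le_sizeT t; simp [sizeF_cons]; omega

lemma sizeF_eq_zero {F : List PlaneTree} (h : sizeF F = 0) : F = [] := by
  cases F with
  | nil => rfl
  | cons t ts => have := one_le_sizeT t; rw [sizeF_cons] at h; omega

lemma covF_size {F G : List PlaneTree} (h : covF F G) : sizeF G = sizeF F := by
  induction h with
  | top pre post us u =>
      simp [sizeF_append, sizeF_cons, sizeT_node]; ring
  | deep pre post ts ts' h ih =>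
      simp [sizeF_append, sizeF_cons, sizeT_node, ih]

lemma tamari_size {F G : List PlaneTree} (h : tamari F G) : sizeF G = sizeF F := by
  induction h with
  | refl => rfl
  | tail _ hc ih => rw [covF_size hc, ih]

lemma finite_sizeF : ∀ n : ℕ, {F : List PlaneTree | sizeF F = n}.Finite := by
  intro n
  induction n using Nat.strong_induction_on with
  | _ n ih =>
    cases n with
    | zero =>
        apply Set.Finite.subset (Set.finite_singleton ([] : List PlaneTree))
        intro F hF
        simp only [Set.mem_setOf_eq] at hF
        simp [sizeF_eq_zero hF]
    | succ n =>
        have hfin : (⋃ k ∈ Set.Iic n,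
            ({F : List PlaneTree | sizeF F = k} ×ˢ {F : List PlaneTree | sizeF F = n - k})).Finite :=
          Set.Finite.biUnion (Set.finite_Iic n)
            (fun k hk => (ih k (by have := Set.mem_Iic.mp hk; omega)).prod (ih (n - k) (by omega)))
        apply Set.Finite.subset
          (hfin.image (fun p : List PlaneTree × List PlaneTree => node p.1 :: p.2))
        rintro F hF
        simp only [Set.mem_setOf_eq] at hF
        cases F with
        | nil => simp [sizeF_nil] at hF
        | cons t rest =>
          cases t with
          | node ts =>
            have h1 : sizeF ts + sizeF rest = n := by
              rw [sizeF_cons, sizeT_node] at hF; omega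
            refine ⟨(ts, rest), ?_, rfl⟩
            simp only [Set.mem_iUnion, Set.mem_Iic, Set.mem_prod, Set.mem_setOf_eq]
            exact ⟨sizeF ts, by omega, rfl, by omega⟩

lemma tamari_finite (F : List PlaneTree) : {G | tamari F G}.Finite :=
  (finite_sizeF (sizeF F)).subset (fun G h => tamari_size h)

lemma codeRF_append (A B : List PlaneTree) : codeRF (A ++ B) = codeRF A ++ codeRF B := by
  induction A with
  | nil => simp [codeRF]
  | cons t ts ih => simp [codeRF, ih]

lemma aMonomial_nil : aMonomial [] = 1 := by simp [aMonomial, codeRF]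

lemma aMonomial_append (A B : List PlaneTree) :
    aMonomial (A ++ B) = aMonomial A * aMonomial B := by
  simp [aMonomial, codeRF_append]

lemma aMonomial_node_singleton (K : List PlaneTree) :
    aMonomial [node K] = aMonomial K * MvPolynomial.X K.length := by
  simp [aMonomial, codeRF, codeRT]

end Lemmas

section Struct

lemma covF_append_left {F G : List PlaneTree} (h : covF F G) (p : List PlaneTree) :
    covF (p ++ F) (p ++ G) := by
  cases h with
  | top pre post us u =>
      have := covF.top (p ++ pre) post us u
      simpa [List.append_assoc] using this
  | deep pre post ts ts' h =>
      have := covF.deep (p ++ pre) post ts ts' h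
      simpa [List.append_assoc] using this

lemma covF_append_right {F G : List PlaneTree} (h : covF F G) (q : List PlaneTree) :
    covF (F ++ q) (G ++ q) := by
  cases h with
  | top pre post us u =>
      have := covF.top pre (post ++ q) us u
      simpa [List.append_assoc] using this
  | deep pre post ts ts' h =>
      have := covF.deep pre (post ++ q) ts ts' h
      simpa [List.append_assoc] using this

lemma tamari_append_left {F G : List PlaneTree} (h : tamari F G) (p : List PlaneTree) :
    tamari (p ++ F) (p ++ G) :=
  Relation.ReflTransGen.lift (fun X => p ++ X) (fun _ _ hc => covF_append_left hc p) _ _ h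

lemma tamari_append_right {F G : List PlaneTree} (h : tamari F G) (q : List PlaneTree) :
    tamari (F ++ q) (G ++ q) :=
  Relation.ReflTransGen.lift (fun X => X ++ q) (fun _ _ hc => covF_append_right hc q) _ _ h

lemma tamari_append {A A' B B' : List PlaneTree} (hA : tamari A A') (hB : tamari B B') :
    tamari (A ++ B) (A' ++ B') :=
  (tamari_append_right hA B).trans (tamari_append_left hB A')

lemma covF_node {F G : List PlaneTree} (h : covF F G) : covF [node F] [node G] := by
  have := covF.deep [] [] F G h
  simpa using this

lemma tamari_node {F G : List PlaneTree} (h : tamari F G) :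
    tamari [node F] [node G] :=
  Relation.ReflTransGen.lift (fun X => [node X]) (fun _ _ hc => covF_node hc) _ _ h

lemma covF_append_split {A B C : List PlaneTree} (h : covF (A ++ B) C) :
    (∃ A', covF A A' ∧ C = A' ++ B) ∨ ∃ B', covF B B' ∧ C = A ++ B' := by
  generalize hAB : A ++ B = D at h
  cases h with
  | top pre post us u =>
      rcases List.append_eq_append_iff.mp hAB with ⟨a', ha, hb⟩ | ⟨c', hc, hd⟩
      · right
        refine ⟨a' ++ u :: node us :: post, hb ▸ covF.top a' post us u, ?_⟩
        rw [ha, List.append_assoc]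
      · cases c' with
        | nil =>
            right
            have hB : B = node (u :: us) :: post := by simpa using hd.symm
            have hA : A = pre := by simpa using hc
            refine ⟨u :: node us :: post, ?_, by rw [hA]⟩
            rw [hB]
            have := covF.top [] post us u
            simpa using this
        | cons x c'' =>
            left
            have hx : node (u :: us) = x ∧ post = c'' ++ B := by
              simpa using hd
            refine ⟨pre ++ u :: node us :: c'', ?_, ?_⟩
            · rw [hc, ← hx.1]; exact covF.top pre c'' us u
            · rw [hx.2]; simp [List.append_assoc]
  | deep pre post ts ts' hcov =>
      rcases List.append_eq_append_iff.mp hAB with ⟨a', ha, hb⟩ | ⟨c', hc, hd⟩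
      · right
        refine ⟨a' ++ node ts' :: post, hb ▸ covF.deep a' post ts ts' hcov, ?_⟩
        rw [ha, List.append_assoc]
      · cases c' with
        | nil =>
            right
            have hB : B = node ts :: post := by simpa using hd.symm
            have hA : A = pre := by simpa using hc
            refine ⟨node ts' :: post, ?_, by rw [hA]⟩
            rw [hB]
            have := covF.deep [] post ts ts' hcov
            simpa using this
        | cons x c'' =>
            left
            have hx : node ts = x ∧ post = c'' ++ B := by simpa using hd
            refine ⟨pre ++ node ts' :: c'', ?_, ?_⟩
            · rw [hc, ← hx.1]; exact covF.deep pre c'' ts ts' hcov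
            · rw [hx.2]; simp [List.append_assoc]

lemma not_covF_nil {C : List PlaneTree} : ¬ covF [] C := by
  intro h
  generalize hAB : ([] : List PlaneTree) = D at h
  cases h with
  | top pre post us u => simp at hAB
  | deep pre post ts ts' hc => simp at hAB

lemma tamari_nil_iff {G : List PlaneTree} : tamari [] G ↔ G = [] := by
  constructor
  · intro h
    induction h with
    | refl => rfl
    | tail _ hc ih => subst ih; exact absurd hc not_covF_nil
  · rintro rfl; exact Relation.ReflTransGen.refl

end Struct

section Decomp

lemma tamari_cons_iff {t : PlaneTree} {ts G : List PlaneTree} :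
    tamari (t :: ts) G ↔ ∃ G₁ G₂, tamari [t] G₁ ∧ tamari ts G₂ ∧ G = G₁ ++ G₂ := by
  constructor
  · intro h
    induction h with
    | refl => exact ⟨[t], ts, Relation.ReflTransGen.refl, Relation.ReflTransGen.refl, rfl⟩
    | tail _ hc ih =>
        obtain ⟨G₁, G₂, h1, h2, rfl⟩ := ih
        rcases covF_append_split hc with ⟨A', hA, rfl⟩ | ⟨B', hB, rfl⟩
        · exact ⟨A', G₂, h1.tail hA, h2, rfl⟩
        · exact ⟨G₁, B', h1, h2.tail hB, rfl⟩
  · rintro ⟨G₁, G₂, h1, h2, rfl⟩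
    exact tamari_append h1 h2

lemma covF_singleton_node {K : List PlaneTree} {C : List PlaneTree}
    (h : covF [node K] C) :
    (∃ u us, K = u :: us ∧ C = [u, node us]) ∨ ∃ K', covF K K' ∧ C = [node K'] := by
  generalize hAB : [node K] = D at h
  cases h with
  | top pre post us u =>
      left
      cases pre with
      | nil =>
          have h1 : node (u :: us) = node K ∧ post = [] := by simpa using hAB.symm
          refine ⟨u, us, ?_, ?_⟩
          · have := h1.1; injection this with h2; exact h2.symm
          · simp [h1.2]
      | cons x p' =>
          exfalso
          have := congrArg List.length hAB
          simp at this
  | deep pre post ts ts' hc =>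
      right
      cases pre with
      | nil =>
          have h1 : node ts = node K ∧ post = [] := by simpa using hAB.symm
          have h2 : ts = K := by injection h1.1
          exact ⟨ts', h2 ▸ hc, by simp [h1.2]⟩
      | cons x p' =>
          exfalso
          have := congrArg List.length hAB
          simp at this

lemma tamari_node_iff {ts G : List PlaneTree} :
    tamari [node ts] G ↔ ∃ H K, tamari ts (H ++ K) ∧ G = H ++ [node K] := by
  constructor
  · intro h
    induction h with
    | refl => exact ⟨[], ts, Relation.ReflTransGen.refl, rfl⟩
    | tail _ hc ih =>
        obtain ⟨H, K, h1, rfl⟩ := ih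
        rcases covF_append_split hc with ⟨H', hH, rfl⟩ | ⟨B', hB, rfl⟩
        · exact ⟨H', K, h1.tail (covF_append_right hH K), rfl⟩
        · rcases covF_singleton_node hB with ⟨u, us, rfl, rfl⟩ | ⟨K', hK, rfl⟩
          · refine ⟨H ++ [u], us, ?_, by simp⟩
            have : H ++ u :: us = (H ++ [u]) ++ us := by simp
            exact this ▸ h1
          · exact ⟨H, K', h1.tail (covF_append_left hK H), rfl⟩
  · rintro ⟨H, K, h1, rfl⟩
    have step1 : tamari [node ts] [node (H ++ K)] := tamari_node h1
    refine step1.trans ?_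
    clear h1 step1
    induction H with
    | nil => exact Relation.ReflTransGen.refl
    | cons u H' ih =>
        have hstep : covF [node (u :: (H' ++ K))] [u, node (H' ++ K)] := by
          have := covF.top [] [] (H' ++ K) u
          simpa using this
        refine Relation.ReflTransGen.head hstep ?_
        have := tamari_append_left ih [u]
        simpa [tamari] using this

lemma prefix_sizeF_inj :
    ∀ {A B A' B' : List PlaneTree}, A ++ B = A' ++ B' → sizeF A = sizeF A' →
      A = A' ∧ B = B' := by
  intro A
  induction A with
  | nil =>
      intro B A' B' h hs
      have : A' = [] := sizeF_eq_zero (by rw [← hs]; rfl)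
      subst this
      exact ⟨rfl, h⟩
  | cons t ts ih =>
      intro B A' B' h hs
      cases A' with
      | nil =>
          exfalso
          have := one_le_sizeT t
          rw [sizeF_cons, sizeF_nil] at hs
          omega
      | cons t' ts' =>
          simp only [List.cons_append, List.cons.injEq] at h
          obtain ⟨rfl, h2⟩ := h
          rw [sizeF_cons, sizeF_cons] at hs
          have := ih h2 (by omega)
          exact ⟨by rw [this.1], this.2⟩

end Decomp

section SFdef

noncomputable def SF (F : List PlaneTree) (m : ℤ) : MvPolynomial ℕ ℚ :=
  ∑ᶠ G ∈ {G : List PlaneTree | tamari F G ∧ (G.length : ℤ) = -m}, aMonomial G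

lemma SFset_finite (F : List PlaneTree) (m : ℤ) :
    {G : List PlaneTree | tamari F G ∧ (G.length : ℤ) = -m}.Finite :=
  (tamari_finite F).subset (fun _ h => h.1)

noncomputable def SFfin (F : List PlaneTree) (m : ℤ) : Finset (List PlaneTree) :=
  (SFset_finite F m).toFinset

lemma mem_SFfin {F : List PlaneTree} {m : ℤ} {G : List PlaneTree} :
    G ∈ SFfin F m ↔ tamari F G ∧ (G.length : ℤ) = -m := by
  simp [SFfin]

lemma SF_eq_sum (F : List PlaneTree) (m : ℤ) : SF F m = ∑ G ∈ SFfin F m, aMonomial G :=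
  finsum_mem_eq_finite_toFinset_sum _ _

lemma sizeF_singleton (t : PlaneTree) : sizeF [t] = sizeT t := by
  rw [sizeF_cons, sizeF_nil]; omega

lemma SF_eq_zero_of_nonneg {F : List PlaneTree} {m : ℤ} (hF : F ≠ []) (hm : 0 ≤ m) :
    SF F m = 0 := by
  rw [SF_eq_sum]
  rw [show SFfin F m = ∅ from Finset.eq_empty_of_forall_notMem fun G hG => ?_, Finset.sum_empty]
  rw [mem_SFfin] at hG
  have hlen : G.length = 0 := by omega
  have hG0 : G = [] := List.length_eq_zero_iff.mp hlen
  subst hG0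
  have := tamari_size hG.1
  rw [sizeF_nil] at this
  exact hF (sizeF_eq_zero this.symm)

lemma SF_eq_zero_of_pos {F : List PlaneTree} {m : ℤ} (hm : 0 < m) : SF F m = 0 := by
  rw [SF_eq_sum]
  rw [show SFfin F m = ∅ from Finset.eq_empty_of_forall_notMem fun G hG => ?_, Finset.sum_empty]
  rw [mem_SFfin] at hG
  omega

lemma SF_eq_zero_of_lt {F : List PlaneTree} {m : ℤ} (hm : m < -(sizeF F : ℤ)) :
    SF F m = 0 := by
  rw [SF_eq_sum]
  rw [show SFfin F m = ∅ from Finset.eq_empty_of_forall_notMem fun G hG => ?_, Finset.sum_empty]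
  rw [mem_SFfin] at hG
  have h1 : G.length ≤ sizeF G := length_le_sizeF G
  have h2 := tamari_size hG.1
  omega

lemma SF_nil (m : ℤ) : SF [] m = if m = 0 then 1 else 0 := by
  by_cases hm : m = 0
  · subst hm
    have hset : {G : List PlaneTree | tamari [] G ∧ (G.length : ℤ) = -0} = {[]} := by
      ext G
      simp only [Set.mem_setOf_eq, tamari_nil_iff, Set.mem_singleton_iff]
      constructor
      · rintro ⟨rfl, _⟩; rfl
      · rintro rfl; simp
    rw [SF, hset, finsum_mem_singleton, aMonomial_nil, if_pos rfl]
  · have hset : {G : List PlaneTree | tamari [] G ∧ (G.length : ℤ) = -m} = ∅ := by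
      ext G
      simp only [Set.mem_setOf_eq, tamari_nil_iff, Set.mem_empty_iff_false, iff_false, not_and]
      rintro rfl
      simp only [List.length_nil, Nat.cast_zero]
      omega
    rw [SF, hset, finsum_mem_empty, if_neg hm]

-- unfolding tests
example (us : List PlaneTree) (m : ℤ) : phiT (node us) m = pplus (lmul (phiF us) aSeries) m := by
  rw [phiT]

example (m : ℤ) : phiF [] m = if m = 0 then 1 else 0 := by
  rw [phiF]

example (t : PlaneTree) (ts : List PlaneTree) (m : ℤ) :
    phiF (t :: ts) m = lmul (phiT t) (phiF ts) m := by
  rw [phiF]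

end SFdef

section ConsCore

lemma cons_core (t : PlaneTree) (ts : List PlaneTree)
    (ht : ∀ i, phiT t i = SF [t] i) (hts : ∀ i, phiF ts i = SF ts i) (m : ℤ) :
    phiF (t :: ts) m = SF (t :: ts) m := by
  have h1 : phiF (t :: ts) m = ∑ᶠ i : ℤ, SF [t] i * SF ts (m - i) := by
    rw [phiF]
    unfold lmul
    exact finsum_congr fun i => by rw [ht, hts]
  rw [h1]
  set J : Finset ℤ := Finset.Icc (-(sizeT t : ℤ)) (-1) with hJ
  have hsupp : Function.support (fun i => SF [t] i * SF ts (m - i)) ⊆ (J : Set ℤ) := by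
    intro i hi
    simp only [Function.mem_support, ne_eq] at hi
    by_contra hiJ
    apply hi
    simp only [hJ, Finset.coe_Icc, Set.mem_Icc, not_and_or, not_le] at hiJ
    have hz : SF [t] i = 0 := by
      rcases hiJ with h | h
      · exact SF_eq_zero_of_lt (by rw [sizeF_singleton]; omega)
      · exact SF_eq_zero_of_nonneg (by simp) (by omega)
    rw [hz, zero_mul]
  rw [finsum_eq_finset_sum_of_support_subset _ hsupp, SF_eq_sum (t :: ts) m]
  have h2 : ∀ i ∈ J, SF [t] i * SF ts (m - i) =
      ∑ p ∈ (SFfin [t] i) ×ˢ (SFfin ts (m - i)), aMonomial p.1 * aMonomial p.2 := by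
    intro i _
    rw [SF_eq_sum, SF_eq_sum, Finset.sum_mul_sum, ← Finset.sum_product']
  rw [Finset.sum_congr rfl h2,
    Finset.sum_sigma' J (fun i => (SFfin [t] i) ×ˢ (SFfin ts (m - i)))
      (fun _ p => aMonomial p.1 * aMonomial p.2)]
  refine Finset.sum_bij (fun x _ => x.2.1 ++ x.2.2) ?_ ?_ ?_ ?_
  · rintro ⟨i, G₁, G₂⟩ hx
    simp only [Finset.mem_sigma, Finset.mem_product, mem_SFfin] at hx
    obtain ⟨_, ⟨hG₁, hl₁⟩, hG₂, hl₂⟩ := hx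
    rw [mem_SFfin]
    constructor
    · exact tamari_cons_iff.mpr ⟨G₁, G₂, hG₁, hG₂, rfl⟩
    · simp only [List.length_append]
      push_cast
      omega
  · rintro ⟨i, G₁, G₂⟩ hx ⟨i', G₁', G₂'⟩ hx' heq
    dsimp only at hx hx' heq
    simp only [Finset.mem_sigma, Finset.mem_product, mem_SFfin] at hx hx'
    obtain ⟨_, ⟨hG₁, hl₁⟩, hG₂, hl₂⟩ := hx
    obtain ⟨_, ⟨hG₁', hl₁'⟩, hG₂', hl₂'⟩ := hx'
    have hs : sizeF G₁ = sizeF G₁' := by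
      rw [tamari_size hG₁, tamari_size hG₁']
    obtain ⟨rfl, rfl⟩ := prefix_sizeF_inj heq hs
    have : i = i' := by omega
    subst this
    rfl
  · intro b hb
    rw [mem_SFfin] at hb
    obtain ⟨hbt, hbl⟩ := hb
    obtain ⟨G₁, G₂, h1, h2, rfl⟩ := tamari_cons_iff.mp hbt
    have hsz : sizeF G₁ = sizeT t := by
      rw [tamari_size h1, sizeF_singleton]
    have hG₁ne : G₁ ≠ [] := by
      intro h; subst h
      have := one_le_sizeT t
      rw [sizeF_nil] at hsz; omega
    have hlen1 : 1 ≤ G₁.length := by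
      cases G₁ with
      | nil => exact absurd rfl hG₁ne
      | cons a l => simp
    have hlenle : G₁.length ≤ sizeT t := by
      have := length_le_sizeF G₁; omega
    refine ⟨⟨-(G₁.length : ℤ), (G₁, G₂)⟩, ?_, rfl⟩
    simp only [Finset.mem_sigma, Finset.mem_product, mem_SFfin, hJ, Finset.mem_Icc]
    refine ⟨⟨by omega, by omega⟩, ⟨h1, by omega⟩, h2, ?_⟩
    simp only [List.length_append] at hbl
    push_cast at hbl ⊢
    omega
  · rintro ⟨i, G₁, G₂⟩ _
    exact (aMonomial_append G₁ G₂).symm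

end ConsCore

section TreeCore

lemma tree_core (us : List PlaneTree) (hus : ∀ j, phiF us j = SF us j) (m : ℤ) :
    phiT (node us) m = SF [node us] m := by
  by_cases hm : m < 0
  · have h1 : phiT (node us) m = ∑ᶠ j : ℤ, SF us j * aSeries (m - j) := by
      rw [phiT]
      unfold pplus lmul
      rw [if_pos hm]
      exact finsum_congr fun j => by rw [hus]
    rw [h1]
    set k : ℕ := (-m - 1).toNat with hkdef
    have hk : (k : ℤ) = -m - 1 := Int.toNat_of_nonneg (by omega)
    set J : Finset ℤ := Finset.Icc (-(sizeF us : ℤ)) 0 with hJ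
    have hsupp : Function.support (fun j => SF us j * aSeries (m - j)) ⊆ (J : Set ℤ) := by
      intro j hj
      simp only [Function.mem_support, ne_eq] at hj
      by_contra hjJ
      apply hj
      simp only [hJ, Finset.coe_Icc, Set.mem_Icc, not_and_or, not_le] at hjJ
      have hz : SF us j = 0 := by
        rcases hjJ with h | h
        · exact SF_eq_zero_of_lt (by omega)
        · exact SF_eq_zero_of_pos h
      rw [hz, zero_mul]
    rw [finsum_eq_finset_sum_of_support_subset _ hsupp]
    have h2 : ∀ j ∈ J, SF us j * aSeries (m - j) =
        ∑ F' ∈ SFfin us j, aMonomial F' * aSeries (m - j) := by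
      intro j _
      rw [SF_eq_sum, Finset.sum_mul]
    rw [Finset.sum_congr rfl h2,
      Finset.sum_sigma' J (fun j => SFfin us j) (fun j F' => aMonomial F' * aSeries (m - j))]
    rw [← Finset.sum_filter_of_ne (p := fun x : (_ : ℤ) × List PlaneTree => x.1 ≤ m + 1) ?ne]
    case ne =>
      rintro ⟨j, F'⟩ hx hne
      dsimp only at hne ⊢
      by_contra hgt
      apply hne
      have : aSeries (m - j) = 0 := by
        simp only [aSeries]
        rw [if_neg (by omega)]
      rw [this, mul_zero]
    rw [SF_eq_sum]
    refine Finset.sum_bij (fun x _ => x.2.take k ++ [node (x.2.drop k)]) ?_ ?_ ?_ ?_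
    · rintro ⟨j, F'⟩ hx
      dsimp only at hx ⊢
      simp only [Finset.mem_filter, Finset.mem_sigma, mem_SFfin, hJ, Finset.mem_Icc] at hx
      obtain ⟨⟨hjJ, hF', hlF'⟩, hjle⟩ := hx
      have hkle : k ≤ F'.length := by omega
      rw [mem_SFfin]
      constructor
      · exact tamari_node_iff.mpr ⟨F'.take k, F'.drop k, by rw [List.take_append_drop]; exact hF', rfl⟩
      · simp only [List.length_append, List.length_take, List.length_cons, List.length_nil]
        have : min k F'.length = k := min_eq_left hkle
        rw [this]
        push_cast
        omega
    · rintro ⟨j, F'⟩ hx ⟨j', F''⟩ hx' heq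
      dsimp only at hx hx' heq
      simp only [Finset.mem_filter, Finset.mem_sigma, mem_SFfin, hJ, Finset.mem_Icc] at hx hx'
      obtain ⟨⟨hjJ, hF', hlF'⟩, hjle⟩ := hx
      obtain ⟨⟨hjJ', hF'', hlF''⟩, hjle'⟩ := hx'
      have hkle : k ≤ F'.length := by omega
      have hkle' : k ≤ F''.length := by omega
      have hlen : (F'.take k).length = (F''.take k).length := by
        simp [min_eq_left hkle, min_eq_left hkle']
      obtain ⟨h1, h2⟩ := List.append_inj heq hlen
      have h3 : F'.drop k = F''.drop k := by
        injection h2 with h2a _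
        injection h2a
      have hFF : F' = F'' := by
        rw [← List.take_append_drop k F', ← List.take_append_drop k F'', h1, h3]
      subst hFF
      have : j = j' := by omega
      subst this
      rfl
    · intro b hb
      rw [mem_SFfin] at hb
      obtain ⟨hbt, hbl⟩ := hb
      obtain ⟨H, K, h1, rfl⟩ := tamari_node_iff.mp hbt
      have hHlen : H.length = k := by
        simp only [List.length_append, List.length_cons, List.length_nil] at hbl
        push_cast at hbl
        omega
      have hszle : (H ++ K).length ≤ sizeF us := by
        have h2 := length_le_sizeF (H ++ K)
        have h3 := tamari_size h1
        omega
      refine ⟨⟨-((H ++ K).length : ℤ), H ++ K⟩, ?_, ?_⟩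
      · simp only [Finset.mem_filter, Finset.mem_sigma, mem_SFfin, hJ, Finset.mem_Icc]
        refine ⟨⟨⟨by push_cast; omega, by push_cast; omega⟩, h1, by omega⟩, ?_⟩
        simp only [List.length_append]
        push_cast
        omega
      · dsimp only
        rw [← hHlen, List.take_left, List.drop_left]
    · rintro ⟨j, F'⟩ hx
      dsimp only at hx ⊢
      simp only [Finset.mem_filter, Finset.mem_sigma, mem_SFfin, hJ, Finset.mem_Icc] at hx
      obtain ⟨⟨hjJ, hF', hlF'⟩, hjle⟩ := hx
      have hkle : k ≤ F'.length := by omega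
      rw [aMonomial_append, aMonomial_node_singleton, ← mul_assoc, ← aMonomial_append,
        List.take_append_drop]
      congr 1
      simp only [aSeries]
      rw [if_pos (by omega)]
      congr 1
      simp only [List.length_drop]
      omega
  · rw [SF_eq_zero_of_nonneg (by simp) (by omega)]
    rw [phiT]
    unfold pplus
    rw [if_neg hm]

end TreeCore

lemma main_induction : ∀ n : ℕ,
    (∀ t : PlaneTree, sizeT t ≤ n → ∀ m : ℤ, phiT t m = SF [t] m) ∧
    (∀ F : List PlaneTree, sizeF F ≤ n → ∀ m : ℤ, phiF F m = SF F m) := by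
  intro n
  induction n using Nat.strong_induction_on with
  | _ n ih =>
    have htree : ∀ t : PlaneTree, sizeT t ≤ n → ∀ m : ℤ, phiT t m = SF [t] m := by
      intro t hle m
      cases t with
      | node us =>
        have h1 : 1 ≤ sizeT (node us) := one_le_sizeT _
        have hn : 1 ≤ n := le_trans h1 hle
        have hus : sizeF us ≤ n - 1 := by
          rw [sizeT_node] at hle; omega
        exact tree_core us (fun j => (ih (n - 1) (by omega)).2 us hus j) m
    refine ⟨htree, ?_⟩
    intro F hle m
    cases F with
    | nil => rw [phiF, SF_nil]
    | cons t ts =>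
      have h1 : sizeT t ≤ n := by rw [sizeF_cons] at hle; omega
      have h2 : sizeF ts ≤ n - 1 := by
        have := one_le_sizeT t
        rw [sizeF_cons] at hle; omega
      have hn : 1 ≤ n := le_trans (one_le_sizeT t) h1
      exact cons_core t ts (htree t h1) ((ih (n - 1) (by omega)).2 ts h2) m

/-- For any plane tree `T`, `φ⁺(Y_T) = Σ_{F ≥ T} a_F z^{-r(F)}`, the sum being over all
plane forests `F` above `T` in the Tamari order, `r(F)` the number of roots of `F` and
`a_F` the monomial of the reverse Polish code of `F`.  Stated coefficientwise: the
coefficient of `z^m` in `φ⁺(Y_T)` is the sum of `a_F` over forests `F ≥ T` with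
`r(F) = -m`. -/
theorem phiPlus_eq_tamari_sum (T : PlaneTree) (m : ℤ) :
    phiT T m = ∑ᶠ G ∈ {G : List PlaneTree | tamari [T] G ∧ (G.length : ℤ) = -m},
      aMonomial G := by
  have := (main_induction (sizeT T)).1 T le_rfl m
  rw [this, SF]

end PlaneTree
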